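/- Let G = (V,E) be a finite simple graph, S ⊆ V, and let x : E → ℝ be nonnegative edge lengths. Suppose (y,d) is sep-LP(x,S)-feasible and (f,g) is S-valid. Then ∑_{T ⊆ S, v ∈ T} g_{T,v}·(|T| − |S|/2) − ∑_{u,v ∈ V} ∑_{P ∈ 𝒫(u,v)} f^{uv}_P · ∑_{e ∈ E(P)} x_e ≤ ∑_{v ∈ V} y_v. In words: the flow objective of any S-valid pair (f,g) is at most the value ∑_v y_v of any sep-LP(x,S)-feasible pair (y,d). -/

import Mathlib

/-!
Weak LP duality, carried out by hand. Weighting the separation constraint of `(T, v)` by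
`g T v` bounds the demand term by `∑_{u,v} d(u,v) ∑_{T ∋ u,v} g T v`. Symmetrizing over unordered
pairs and applying the first validity constraint bounds this by `∑_{u ≤ v} ∑_P f_P d(u,v)`, and the
path constraint of sep-LP bounds each `d(u,v)` by `x(P) + y(P)`. The `x`-part is the cost term of
the flow objective, and the `y`-part equals `∑_t y_t · (flow through t)`, which the second
validity constraint bounds by `∑_t y_t`.
-/

def SepLPFeasible {V : Type*} [Fintype V] [DecidableEq V] (G : SimpleGraph V)
    (x : Sym2 V → ℝ) (S : Finset V) (y : V → ℝ) (d : V → V → ℝ) : Prop :=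
  (∀ v, 0 ≤ y v) ∧ (∀ u v, 0 ≤ d u v) ∧ (∀ u v, d u v = d v u) ∧
  (∀ (u v : V) (p : G.Walk u v), p.IsPath →
    d u v ≤ (p.edges.map x).sum + (p.support.map y).sum) ∧
  (∀ T ⊆ S, ∀ v ∈ T, (T.card : ℝ) - (S.card : ℝ) / 2 ≤ ∑ u ∈ T, d u v)

/-- An unordered pair of vertices is encoded as `(u, v)` with `u ≤ v`; `f` is read only on
simple paths. -/
def SValid {V : Type*} [Fintype V] [LinearOrder V] (G : SimpleGraph V)
    [DecidableRel G.Adj] (S : Finset V)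
    (f : ∀ u v : V, G.Walk u v → ℝ) (g : Finset V → V → ℝ) : Prop :=
  (∀ (u v : V) (p : G.Walk u v), 0 ≤ f u v p) ∧ (∀ T v, 0 ≤ g T v) ∧
  (∀ u v : V, u ≤ v →
    ∑ T ∈ S.powerset.filter (fun T => u ∈ T ∧ v ∈ T), (g T u + g T v) ≤
      ∑ p : {p : G.Walk u v // p.IsPath}, f u v p.1) ∧
  (∀ t : V,
    ∑ u : V, ∑ v : V,
      (if u ≤ v then
        ∑ p : {p : G.Walk u v // p.IsPath}, (if t ∈ p.1.support then f u v p.1 else 0)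
       else 0) ≤ 1)

noncomputable def flowObj {V : Type*} [Fintype V] [LinearOrder V] (G : SimpleGraph V)
    [DecidableRel G.Adj] (S : Finset V) (x : Sym2 V → ℝ)
    (f : ∀ u v : V, G.Walk u v → ℝ) (g : Finset V → V → ℝ) : ℝ :=
  (∑ T ∈ S.powerset, ∑ v ∈ T, g T v * ((T.card : ℝ) - (S.card : ℝ) / 2)) -
    ∑ u : V, ∑ v : V,
      (if u ≤ v then
        ∑ p : {p : G.Walk u v // p.IsPath}, f u v p.1 * (p.1.edges.map x).sum
       else 0)

open Finset

theorem sum_sum_ite_le_add_eq_add_sum_diag {α M : Type*} [Fintype α] [LinearOrder α] [AddCommMonoid M]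
    (h : α → α → M) :
    ∑ a, ∑ b, (if a ≤ b then h a b + h b a else 0) = ∑ a, ∑ b, h a b + ∑ a, h a a := by
  have hsplit : ∀ a b, (if a ≤ b then h a b else 0) + (if b ≤ a then h a b else 0)
      = h a b + if a = b then h a b else 0 := by
    intro a b
    rcases lt_trichotomy a b with hab | rfl | hab
    · simp [hab.le, hab.not_ge, hab.ne]
    · simp
    · simp [hab.le, hab.not_ge, hab.ne']
  calc ∑ a, ∑ b, (if a ≤ b then h a b + h b a else 0)
      = ∑ a, ∑ b, (if a ≤ b then h a b else 0) + ∑ a, ∑ b, (if a ≤ b then h b a else 0) := by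
        simp only [← sum_add_distrib, ite_add_zero]
    _ = ∑ a, ∑ b, ((if a ≤ b then h a b else 0) + (if b ≤ a then h a b else 0)) := by
        rw [sum_comm (f := fun a b => if a ≤ b then h b a else 0)]
        simp only [← sum_add_distrib]
    _ = ∑ a, ∑ b, h a b + ∑ a, h a a := by
        simp only [hsplit, sum_add_distrib, sum_ite_eq, mem_univ, if_true]

theorem sum_sum_sum_mem_comm {α M : Type*} [Fintype α] [DecidableEq α] [AddCommMonoid M]
    (F : Finset (Finset α)) (h : Finset α → α → α → M) :
    ∑ T ∈ F, ∑ v ∈ T, ∑ u ∈ T, h T u v = ∑ u, ∑ v, ∑ T ∈ F with u ∈ T ∧ v ∈ T, h T u v := by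
  have hpair : ∀ T : Finset α, ∑ v ∈ T, ∑ u ∈ T, h T u v
      = ∑ u, ∑ v, if u ∈ T ∧ v ∈ T then h T u v else 0 := by
    intro T
    rw [sum_comm]
    simp [ite_and, sum_ite_mem]
  simp only [hpair, sum_filter]
  rw [sum_comm]
  exact sum_congr rfl fun u _ => sum_comm

theorem List.sum_map_eq_sum_ite_mem {α M : Type*} [Fintype α] [DecidableEq α] [AddCommMonoid M]
    {l : List α} (hl : l.Nodup) (f : α → M) :
    (l.map f).sum = ∑ a, if a ∈ l then f a else 0 := by
  simp only [← List.mem_toFinset, sum_ite_mem, univ_inter, List.sum_toFinset f hl]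

theorem sum_mul_sub_le_sum_sum_mul_dist {V : Type*} {S : Finset V} {g : Finset V → V → ℝ}
    {d : V → V → ℝ} (hg : ∀ T v, 0 ≤ g T v)
    (hsep : ∀ T ⊆ S, ∀ v ∈ T, (T.card : ℝ) - (S.card : ℝ) / 2 ≤ ∑ u ∈ T, d u v) :
    ∑ T ∈ S.powerset, ∑ v ∈ T, g T v * ((T.card : ℝ) - (S.card : ℝ) / 2) ≤
      ∑ T ∈ S.powerset, ∑ v ∈ T, ∑ u ∈ T, g T v * d u v := by
  refine sum_le_sum fun T hT => sum_le_sum fun v hv => ?_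
  rw [← mul_sum]
  exact mul_le_mul_of_nonneg_left (hsep T (mem_powerset.mp hT) v hv) (hg T v)

section
variable {V : Type*} [Fintype V] [LinearOrder V] {G : SimpleGraph V} [DecidableRel G.Adj]
  {x : Sym2 V → ℝ} {S : Finset V} {y : V → ℝ} {d : V → V → ℝ}
  {f : ∀ u v : V, G.Walk u v → ℝ} {g : Finset V → V → ℝ}

theorem SValid.sum_mul_dist_add_sum_mul_dist_le (hfg : SValid G S f g)
    (hyd : SepLPFeasible G x S y d) {u v : V} (huv : u ≤ v) :
    ∑ T ∈ S.powerset with u ∈ T ∧ v ∈ T, g T v * d u v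
        + ∑ T ∈ S.powerset with v ∈ T ∧ u ∈ T, g T u * d v u ≤
      ∑ p : {p : G.Walk u v // p.IsPath},
        f u v p.1 * ((p.1.edges.map x).sum + (p.1.support.map y).sum) := by
  obtain ⟨hf, -, hdemand, -⟩ := hfg
  obtain ⟨-, hd, hdsymm, hpath, -⟩ := hyd
  have hswap : ∑ T ∈ S.powerset with v ∈ T ∧ u ∈ T, g T u * d v u
      = ∑ T ∈ S.powerset with u ∈ T ∧ v ∈ T, g T u * d u v := by
    simp only [hdsymm v u, and_comm]
  calc _ = (∑ T ∈ S.powerset with u ∈ T ∧ v ∈ T, (g T u + g T v)) * d u v := by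
        rw [hswap, ← sum_add_distrib, sum_mul]
        exact sum_congr rfl fun T _ => by ring
    _ ≤ (∑ p : {p : G.Walk u v // p.IsPath}, f u v p.1) * d u v :=
        mul_le_mul_of_nonneg_right (hdemand u v huv) (hd u v)
    _ = ∑ p : {p : G.Walk u v // p.IsPath}, f u v p.1 * d u v := sum_mul ..
    _ ≤ _ := sum_le_sum fun p _ => mul_le_mul_of_nonneg_left (hpath u v p.1 p.2) (hf u v p.1)

theorem SValid.sum_vertex_cost_le (hfg : SValid G S f g) (hy : ∀ t, 0 ≤ y t) :
    ∑ u : V, ∑ v : V,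
      (if u ≤ v then ∑ p : {p : G.Walk u v // p.IsPath}, f u v p.1 * (p.1.support.map y).sum
       else 0) ≤ ∑ t, y t := by
  obtain ⟨-, -, -, hload⟩ := hfg
  have hsupp : ∀ u v (p : {p : G.Walk u v // p.IsPath}), (p.1.support.map y).sum =
      ∑ t, if t ∈ p.1.support then y t else 0 := fun u v p =>
    List.sum_map_eq_sum_ite_mem p.2.support_nodup y
  calc _ = ∑ t, (∑ u : V, ∑ v : V,
      (if u ≤ v then
        ∑ p : {p : G.Walk u v // p.IsPath}, (if t ∈ p.1.support then f u v p.1 else 0)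
       else 0)) * y t := by
        simp only [hsupp, mul_sum, sum_mul, mul_ite, ite_mul, mul_zero, zero_mul]
        rw [eq_comm, sum_comm]
        refine sum_congr rfl fun u _ => ?_
        rw [sum_comm]
        refine sum_congr rfl fun v _ => ?_
        simp only [sum_ite_irrel, sum_const_zero]
        exact if_congr Iff.rfl sum_comm rfl
    _ ≤ ∑ t, y t := sum_le_sum fun t _ => mul_le_of_le_one_left (hy t) (hload t)
end

theorem flow_le_sep_general
    {V : Type*} [Fintype V] [LinearOrder V] (G : SimpleGraph V) [DecidableRel G.Adj]
    (x : Sym2 V → ℝ) (S : Finset V)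
    (y : V → ℝ) (d : V → V → ℝ) (hyd : SepLPFeasible G x S y d)
    (f : ∀ u v : V, G.Walk u v → ℝ) (g : Finset V → V → ℝ) (hfg : SValid G S f g) :
    flowObj G S x f g ≤ ∑ v : V, y v := by
  obtain ⟨hy, hd, -, -, hsep⟩ := id hyd
  obtain ⟨-, hg, -, -⟩ := id hfg
  set N : V → V → ℝ := fun u v => ∑ T ∈ S.powerset with u ∈ T ∧ v ∈ T, g T v * d u v
  have hN_diag : ∀ v, 0 ≤ N v v := fun v => sum_nonneg fun T _ => mul_nonneg (hg T v) (hd v v)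
  rw [flowObj, sub_le_iff_le_add]
  calc _ ≤ ∑ T ∈ S.powerset, ∑ v ∈ T, ∑ u ∈ T, g T v * d u v :=
        sum_mul_sub_le_sum_sum_mul_dist hg hsep
    _ = ∑ u, ∑ v, N u v := sum_sum_sum_mem_comm _ _
    _ ≤ ∑ u, ∑ v, if u ≤ v then N u v + N v u else 0 := by
        rw [sum_sum_ite_le_add_eq_add_sum_diag]
        exact le_add_of_nonneg_right (sum_nonneg fun v _ => hN_diag v)
    _ ≤ ∑ u, ∑ v, if u ≤ v then ∑ p : {p : G.Walk u v // p.IsPath},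
          f u v p.1 * ((p.1.edges.map x).sum + (p.1.support.map y).sum) else 0 := by
        gcongr with u _ v _
        split_ifs with huv
        · exact hfg.sum_mul_dist_add_sum_mul_dist_le hyd huv
        · rfl
    _ = (∑ u, ∑ v, if u ≤ v then ∑ p : {p : G.Walk u v // p.IsPath},
            f u v p.1 * (p.1.support.map y).sum else 0) +
          ∑ u, ∑ v, if u ≤ v then ∑ p : {p : G.Walk u v // p.IsPath},
            f u v p.1 * (p.1.edges.map x).sum else 0 := by
        simp only [mul_add, sum_add_distrib, ite_add_zero, add_comm]
    _ ≤ _ := add_le_add_left (hfg.sum_vertex_cost_le hy) _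

/-- Weak duality direction of Lemma 6.4: the flow objective of any `S`-valid pair `(f, g)`
is at most the value `∑ v, y v` of any sep-LP(`x`,`S`)-feasible pair `(y, d)`. -/
theorem flow_le_sep
    {V : Type*} [Fintype V] [LinearOrder V] (G : SimpleGraph V) [DecidableRel G.Adj]
    (x : Sym2 V → ℝ) (hx : ∀ e, 0 ≤ x e) (S : Finset V)
    (y : V → ℝ) (d : V → V → ℝ) (hyd : SepLPFeasible G x S y d)
    (f : ∀ u v : V, G.Walk u v → ℝ) (g : Finset V → V → ℝ) (hfg : SValid G S f g) :
    flowObj G S x f g ≤ ∑ v : V, y v :=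
  flow_le_sep_general G x S y d hyd f g hfg
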